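/- (Corollary 1, necessity) In the asymptotic coupon collector setting, if Var(X_n) converges to a finite constant ρ as n → ∞, then α_1 ∈ {0, 1} and α_2 ∈ {0, 1}, where α_i = lim_{n→∞} a_i(n)/n. -/

import Mathlib

set_option maxHeartbeats 1000000

open MeasureTheory ProbabilityTheory Filter Finset
open scoped ENNReal NNReal Topology

lemma card_filter_subsets {n : ℕ} (t : Finset (Fin n)) (a : ℕ) (hta : t.card ≤ a) :
    (Finset.univ.filter fun s : Finset (Fin n) => s.card = a ∧ t ⊆ s).card
      = (n - t.card).choose (a - t.card) := by
  have h1 : ((Finset.univ \ t : Finset (Fin n)).powersetCard (a - t.card)).card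
      = (n - t.card).choose (a - t.card) := by
    rw [Finset.card_powersetCard, Finset.card_sdiff_of_subset (Finset.subset_univ t), Finset.card_univ,
      Fintype.card_fin]
  rw [← h1]
  apply Finset.card_nbij' (fun s => s \ t) (fun u => u ∪ t)
  · intro s hs
    simp only [Finset.mem_coe, Finset.mem_filter, Finset.mem_univ, true_and] at hs
    rw [Finset.mem_coe, Finset.mem_powersetCard]
    refine ⟨Finset.sdiff_subset_sdiff (Finset.subset_univ s) le_rfl, ?_⟩
    rw [Finset.card_sdiff_of_subset hs.2, hs.1]
  · intro u hu
    rw [Finset.mem_coe, Finset.mem_powersetCard] at hu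
    simp only [Finset.mem_coe, Finset.mem_filter, Finset.mem_univ, true_and]
    have hdisj : Disjoint u t :=
      Finset.disjoint_left.2 fun x hx ht => (Finset.mem_sdiff.1 (hu.1 hx)).2 ht
    constructor
    · rw [Finset.card_union_of_disjoint hdisj, hu.2]
      omega
    · exact Finset.subset_union_right
  · intro s hs
    simp only [Finset.mem_coe, Finset.mem_filter, Finset.mem_univ, true_and] at hs
    exact Finset.sdiff_union_of_subset hs.2
  · intro u hu
    rw [Finset.mem_coe, Finset.mem_powersetCard] at hu
    have hdisj : Disjoint u t :=
      Finset.disjoint_left.2 fun x hx ht => (Finset.mem_sdiff.1 (hu.1 hx)).2 ht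
    exact Finset.union_sdiff_cancel_right hdisj

lemma nat_id1 {n a : ℕ} (h1 : 1 ≤ a) (h2 : a ≤ n) :
    n * (n - 1).choose (a - 1) = a * n.choose a := by
  obtain ⟨n', rfl⟩ : ∃ n', n = n' + 1 := ⟨n - 1, by omega⟩
  obtain ⟨a', rfl⟩ : ∃ a', a = a' + 1 := ⟨a - 1, by omega⟩
  simp only [Nat.add_sub_cancel]
  exact (Nat.add_one_mul_choose_eq n' a').trans (mul_comm _ _)

lemma nat_id2 {n a : ℕ} (h1 : 2 ≤ a) (h2 : a ≤ n) :
    n * (n - 1) * (n - 2).choose (a - 2) = a * (a - 1) * n.choose a := by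
  have e1 : (n-1) * ((n-1) - 1).choose ((a-1) - 1) = (a-1) * (n-1).choose (a-1) :=
    nat_id1 (by omega) (by omega)
  have e2 : n * (n - 1).choose (a - 1) = a * n.choose a := nat_id1 (by omega) (by omega)
  have h3 : (n-1) - 1 = n - 2 := by omega
  have h4 : (a-1) - 1 = a - 2 := by omega
  rw [h3, h4] at e1
  calc n * (n-1) * (n-2).choose (a-2) = n * ((n-1) * (n-2).choose (a-2)) := by ring
    _ = n * ((a-1) * (n-1).choose (a-1)) := by rw [e1]
    _ = (a-1) * (n * (n-1).choose (a-1)) := by ring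
    _ = (a-1) * (a * n.choose a) := by rw [e2]
    _ = a * (a-1) * n.choose a := by ring


lemma key_ineq {ι : Type*} [DecidableEq ι] {n x y : ℝ} (hn : 2 ≤ n) (hx1 : 1 ≤ x) (hxn : x ≤ n)
    (hy1 : 1 ≤ y) (hyn : y ≤ n) (s : Finset ι) (r : ι → ℝ) (hr : ∀ i ∈ s, 1 ≤ r i ∧ r i ≤ n) :
    (n - x) * (n - y) / (n * (n - 1)) * ∏ i ∈ s, ((r i - 1) / (n - 1))
      ≤ 1 - x * y * (∏ i ∈ s, r i) / n ^ (s.card + 1)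
        + (x - 1) * (y - 1) * (∏ i ∈ s, (r i - 1)) / (n - 1) ^ (s.card + 1) := by
  have hn0 : (n : ℝ) ≠ 0 := by linarith
  have hn1 : n - 1 ≠ 0 := by linarith
  induction s using Finset.induction_on with
  | empty =>
      apply le_of_eq
      simp only [Finset.prod_empty, Finset.card_empty]
      field_simp
      ring
  | @insert i s hi ih =>
      have hr' : ∀ j ∈ s, 1 ≤ r j ∧ r j ≤ n := fun j hj => hr j (Finset.mem_insert_of_mem hj)
      have hri := hr i (Finset.mem_insert_self i s)
      have ih' := ih hr'
      rw [Finset.prod_insert hi, Finset.prod_insert hi, Finset.prod_insert hi,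
        Finset.card_insert_of_notMem hi]
      have hfac : (0:ℝ) ≤ (r i - 1) / (n - 1) := by
        apply div_nonneg <;> linarith [hri.1]
      have step1 : (n - x) * (n - y) / (n * (n - 1)) * ((r i - 1) / (n - 1) * ∏ j ∈ s, ((r j - 1) / (n - 1)))
          ≤ (r i - 1) / (n - 1) * (1 - x * y * (∏ j ∈ s, r j) / n ^ (s.card + 1)
              + (x - 1) * (y - 1) * (∏ j ∈ s, (r j - 1)) / (n - 1) ^ (s.card + 1)) := by
        calc (n - x) * (n - y) / (n * (n - 1)) * ((r i - 1) / (n - 1) * ∏ j ∈ s, ((r j - 1) / (n - 1)))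
            = (r i - 1) / (n - 1) * ((n - x) * (n - y) / (n * (n - 1)) * ∏ j ∈ s, ((r j - 1) / (n - 1))) := by ring
          _ ≤ _ := mul_le_mul_of_nonneg_left ih' hfac
      refine step1.trans ?_
      -- difference identity
      have hprod_le : x * y * ∏ j ∈ s, r j ≤ n ^ (s.card + 2) := by
        have h1 : ∏ j ∈ s, r j ≤ n ^ s.card := by
          rw [← Finset.prod_const]
          exact Finset.prod_le_prod (fun j hj => by linarith [(hr' j hj).1])
            (fun j hj => (hr' j hj).2)
        have h2 : (0:ℝ) ≤ ∏ j ∈ s, r j :=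
          Finset.prod_nonneg fun j hj => by linarith [(hr' j hj).1]
        have h3 : x * y ≤ n * n := by nlinarith
        have h4 : (0:ℝ) ≤ x * y := by nlinarith
        calc x * y * ∏ j ∈ s, r j ≤ (n*n) * n ^ s.card := by nlinarith [pow_nonneg (by linarith : (0:ℝ) ≤ n) s.card]
          _ = n ^ (s.card + 2) := by ring
      have hdiff : 1 - x * y * (r i * ∏ j ∈ s, r j) / n ^ (s.card + 1 + 1)
            + (x - 1) * (y - 1) * ((r i - 1) * ∏ j ∈ s, (r j - 1)) / (n - 1) ^ (s.card + 1 + 1)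
          - (r i - 1) / (n - 1) * (1 - x * y * (∏ j ∈ s, r j) / n ^ (s.card + 1)
              + (x - 1) * (y - 1) * (∏ j ∈ s, (r j - 1)) / (n - 1) ^ (s.card + 1))
          = (n - r i) / (n - 1) * (1 - x * y * (∏ j ∈ s, r j) / n ^ (s.card + 2)) := by
        have hpn : (n:ℝ) ^ (s.card + 1) ≠ 0 := pow_ne_zero _ hn0
        have hpn1 : (n - 1) ^ (s.card + 1) ≠ 0 := pow_ne_zero _ hn1
        field_simp
        ring
      have hpos : 0 ≤ (n - r i) / (n - 1) * (1 - x * y * (∏ j ∈ s, r j) / n ^ (s.card + 2)) := by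
        apply mul_nonneg
        · apply div_nonneg <;> linarith [hri.2]
        · have : x * y * (∏ j ∈ s, r j) / n ^ (s.card + 2) ≤ 1 := by
            rw [div_le_one (by positivity)]
            exact hprod_le
          linarith
      linarith [hdiff, hpos]


lemma var_formula {m n : ℕ} {Ωn : Type} [MeasurableSpace Ωn]
    (P : Measure Ωn) [IsProbabilityMeasure P]
    (a : Fin m → ℕ) (S : Fin m → Ωn → Finset (Fin n))
    (hmeas : ∀ (i : Fin m) (s : Finset (Fin n)), MeasurableSet {ω | S i ω = s})
    (hindep : iIndepFun (m := fun _ => (⊤ : MeasurableSpace (Finset (Fin n)))) S P)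
    (hunif : ∀ (i : Fin m) (s : Finset (Fin n)),
      P {ω | S i ω = s} = if s.card = a i then ((n.choose (a i) : ℝ≥0∞))⁻¹ else 0)
    (hn : 2 ≤ n) (ha2 : ∀ i, 2 ≤ a i) (han : ∀ i, a i ≤ n) :
    variance (fun ω => ((Finset.univ.inf fun i => S i ω).card : ℝ)) P
      = ((n : ℝ) * ∏ i, ((a i : ℝ) / n)) *
        (1 - (n : ℝ) * ∏ i, ((a i : ℝ) / n)
          + ((n : ℝ) - 1) * ∏ i, (((a i : ℝ) - 1) / ((n : ℝ) - 1))) := by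
  classical
  letI : MeasurableSpace (Finset (Fin n)) := ⊤
  have hSm : ∀ i, Measurable (S i) := by
    intro i
    apply measurable_to_countable'
    intro s
    have : (S i) ⁻¹' {s} = {ω | S i ω = s} := by ext ω; simp [Set.mem_preimage]
    rw [this]; exact hmeas i s
  set Ev : Finset (Fin n) → Set Ωn :=
    fun t => ⋂ i ∈ Finset.univ, S i ⁻¹' {s : Finset (Fin n) | t ⊆ s} with hEvdef
  have hEvMeas : ∀ t, MeasurableSet (Ev t) := by
    intro t
    rw [hEvdef]
    exact Finset.measurableSet_biInter _ fun i _ => hSm i MeasurableSpace.measurableSet_top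
  have hpre : ∀ (i : Fin m) (t : Finset (Fin n)),
      P (S i ⁻¹' {s : Finset (Fin n) | t ⊆ s})
        = ((Finset.univ.filter fun s : Finset (Fin n) => s.card = a i ∧ t ⊆ s).card : ℝ≥0∞)
            * ((n.choose (a i) : ℝ≥0∞))⁻¹ := by
    intro i t
    have hdecomp : S i ⁻¹' {s : Finset (Fin n) | t ⊆ s}
        = ⋃ s ∈ (Finset.univ.filter fun s : Finset (Fin n) => t ⊆ s), {ω | S i ω = s} := by
      ext ω
      simp only [Set.mem_preimage, Set.mem_setOf_eq, Set.mem_iUnion, Finset.mem_filter,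
        Finset.mem_univ, true_and]
      exact ⟨fun h => ⟨S i ω, h, rfl⟩, fun ⟨s, hs, he⟩ => by rw [he]; exact hs⟩
    have hd : (↑(Finset.univ.filter fun s : Finset (Fin n) => t ⊆ s) :
        Set (Finset (Fin n))).PairwiseDisjoint (fun s => {ω | S i ω = s}) := by
      intro s _ s' _ hne
      apply Set.disjoint_left.2
      intro ω hω hω'
      exact hne ((hω.symm.trans hω' : s = s'))
    rw [hdecomp, measure_biUnion_finset hd fun s _ => hmeas i s]
    rw [Finset.sum_congr rfl fun s _ => hunif i s]
    rw [← Finset.sum_filter, Finset.filter_filter,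
      show (Finset.univ.filter fun s : Finset (Fin n) => t ⊆ s ∧ s.card = a i)
          = (Finset.univ.filter fun s : Finset (Fin n) => s.card = a i ∧ t ⊆ s) from
        Finset.filter_congr fun s _ => and_comm,
      Finset.sum_const, nsmul_eq_mul]
  have hEvP : ∀ t : Finset (Fin n), P (Ev t)
      = ∏ i, (((Finset.univ.filter fun s : Finset (Fin n) => s.card = a i ∧ t ⊆ s).card : ℝ≥0∞)
          * ((n.choose (a i) : ℝ≥0∞))⁻¹) := by
    intro t
    have h := (iIndepFun_iff_measure_inter_preimage_eq_mul.mp hindep) Finset.univ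
      (sets := fun _ => {s : Finset (Fin n) | t ⊆ s})
      (fun i _ => MeasurableSpace.measurableSet_top)
    rw [hEvdef]
    rw [h]
    exact Finset.prod_congr rfl fun i _ => hpre i t
  have hc : ∀ i : Fin m, 0 < n.choose (a i) := fun i => Nat.choose_pos (han i)
  have hn0 : (0:ℝ) < n := by positivity
  have hn2R : (2:ℝ) ≤ n := by exact_mod_cast hn
  have hn1 : (0:ℝ) < (n:ℝ) - 1 := by linarith
  have hcR : ∀ i : Fin m, (0:ℝ) < (n.choose (a i) : ℝ) := fun i => by exact_mod_cast hc i
  -- singleton probability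
  have h1 : ∀ j : Fin n, (P (Ev {j})).toReal = ∏ i, ((a i : ℝ) / n) := by
    intro j
    rw [hEvP, ENNReal.toReal_prod]
    refine Finset.prod_congr rfl fun i _ => ?_
    have hcount := card_filter_subsets {j} (a i)
      (by rw [Finset.card_singleton]; exact le_trans one_le_two (ha2 i))
    rw [Finset.card_singleton] at hcount
    rw [hcount, ENNReal.toReal_mul, ENNReal.toReal_natCast, ENNReal.toReal_inv, ENNReal.toReal_natCast,
      ← div_eq_mul_inv, div_eq_div_iff (hcR i).ne' hn0.ne']
    have key := congrArg (Nat.cast : ℕ → ℝ) (nat_id1 (le_trans one_le_two (ha2 i)) (han i))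
    push_cast at key
    linear_combination key
  -- pair probability
  have h2 : ∀ j k : Fin n, j ≠ k → (P (Ev {j, k})).toReal
      = ∏ i, ((a i : ℝ) * ((a i : ℝ) - 1) / ((n:ℝ) * ((n:ℝ) - 1))) := by
    intro j k hjk
    rw [hEvP, ENNReal.toReal_prod]
    refine Finset.prod_congr rfl fun i _ => ?_
    have hcount := card_filter_subsets {j, k} (a i)
      (by rw [Finset.card_pair hjk]; exact ha2 i)
    rw [Finset.card_pair hjk] at hcount
    rw [hcount, ENNReal.toReal_mul, ENNReal.toReal_natCast, ENNReal.toReal_inv, ENNReal.toReal_natCast,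
      ← div_eq_mul_inv, div_eq_div_iff (hcR i).ne' (by positivity : ((n:ℝ) * ((n:ℝ)-1)) ≠ 0)]
    have h1a : (1:ℕ) ≤ a i := le_trans one_le_two (ha2 i)
    have h1n : (1:ℕ) ≤ n := by omega
    have key := congrArg (Nat.cast : ℕ → ℝ) (nat_id2 (ha2 i) (han i))
    push_cast [Nat.cast_sub h1n, Nat.cast_sub h1a] at key
    linear_combination key
  -- membership in inf
  have hmeminf : ∀ (g : Fin m → Finset (Fin n)) (j : Fin n),
      j ∈ Finset.univ.inf g ↔ ∀ i, j ∈ g i := by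
    intro g j
    constructor
    · intro h i
      exact Finset.le_iff_subset.1 (Finset.inf_le (Finset.mem_univ i)) h
    · intro h
      have : ({j} : Finset (Fin n)) ≤ Finset.univ.inf g :=
        Finset.le_inf fun i _ => Finset.singleton_subset_iff.2 (h i)
      exact Finset.singleton_subset_iff.1 this
  have hmemEv : ∀ (ω : Ωn) (j : Fin n),
      ω ∈ Ev {j} ↔ j ∈ (Finset.univ.inf fun i => S i ω) := by
    intro ω j
    rw [hmeminf]
    simp [hEvdef, Finset.singleton_subset_iff]
  set Y : Ωn → ℝ := fun ω => ∑ j : Fin n, (Ev {j}).indicator (fun _ => (1:ℝ)) ω with hYdef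
  have hXY : (fun ω => ((Finset.univ.inf fun i => S i ω).card : ℝ)) = Y := by
    funext ω
    calc ((Finset.univ.inf fun i => S i ω).card : ℝ)
        = ∑ j : Fin n, if j ∈ (Finset.univ.inf fun i => S i ω) then (1:ℝ) else 0 := by
          rw [Finset.sum_ite_mem, Finset.univ_inter, Finset.sum_const, nsmul_eq_mul, mul_one]
      _ = Y ω := by
          rw [hYdef]
          refine Finset.sum_congr rfl fun j _ => ?_
          rw [Set.indicator_apply]
          exact if_congr (hmemEv ω j).symm rfl rfl
  have hYL2 : MemLp Y 2 P := by
    apply memLp_finsetSum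
    intro j _
    exact memLp_indicator_const 2 (hEvMeas {j}) 1 (Or.inr (measure_ne_top P _))
  have hint : ∀ (t : Set Ωn), MeasurableSet t → Integrable (t.indicator fun _ => (1:ℝ)) P :=
    fun t ht => (integrable_const 1).indicator ht
  have hindint : ∀ (t : Set Ωn), MeasurableSet t →
      ∫ ω, t.indicator (fun _ => (1:ℝ)) ω ∂P = (P t).toReal := by
    intro t ht
    rw [integral_indicator_const (1:ℝ) ht, smul_eq_mul, mul_one]
    rfl
  have hEY : ∫ ω, Y ω ∂P = (n:ℝ) * ∏ i, ((a i : ℝ)/n) := by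
    rw [integral_finset_sum _ fun j _ => hint _ (hEvMeas {j})]
    rw [Finset.sum_congr rfl fun j _ => (hindint _ (hEvMeas {j})).trans (h1 j)]
    rw [Finset.sum_const, Finset.card_univ, Fintype.card_fin, nsmul_eq_mul]
  have hpair : ∀ j k : Fin n, Ev {j} ∩ Ev {k} = Ev ({j, k} : Finset (Fin n)) := by
    intro j k
    simp only [hEvdef]
    ext ω
    simp only [Set.mem_inter_iff, Set.mem_iInter, Set.mem_preimage, Set.mem_setOf_eq,
      Finset.singleton_subset_iff, Finset.insert_subset_iff]
    constructor
    · rintro ⟨hj, hk⟩ i _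
      exact ⟨hj i (Finset.mem_univ i), hk i (Finset.mem_univ i)⟩
    · intro h
      exact ⟨fun i _ => (h i (Finset.mem_univ i)).1, fun i _ => (h i (Finset.mem_univ i)).2⟩
  have hY2 : ∀ ω, (Y ω)^2 = ∑ j : Fin n, ∑ k : Fin n,
      ((Ev {j}) ∩ (Ev {k})).indicator (fun _ => (1:ℝ)) ω := by
    intro ω
    rw [hYdef, sq]
    rw [Finset.sum_mul_sum]
    refine Finset.sum_congr rfl fun j _ => Finset.sum_congr rfl fun k _ => ?_
    by_cases h1' : ω ∈ Ev {j} <;> by_cases h2' : ω ∈ Ev {k} <;>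
      simp [Set.indicator_apply, h1', h2']
  have hEY2 : ∫ ω, (Y ω)^2 ∂P
      = (n:ℝ) * ((∏ i, ((a i : ℝ)/n))
          + ((n:ℝ)-1) * ∏ i, ((a i : ℝ) * ((a i : ℝ) - 1) / ((n:ℝ) * ((n:ℝ) - 1)))) := by
    have hrw : (fun ω => (Y ω)^2) = fun ω => ∑ j : Fin n, ∑ k : Fin n,
        ((Ev {j}) ∩ (Ev {k})).indicator (fun _ => (1:ℝ)) ω := funext hY2
    rw [show (∫ ω, (Y ω)^2 ∂P) = ∫ ω, ∑ j : Fin n, ∑ k : Fin n,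
        ((Ev {j}) ∩ (Ev {k})).indicator (fun _ => (1:ℝ)) ω ∂P from by rw [← hrw]]
    rw [integral_finset_sum _ fun j _ => integrable_finset_sum _
      fun k _ => hint _ ((hEvMeas {j}).inter (hEvMeas {k}))]
    rw [Finset.sum_congr rfl fun j _ => integral_finset_sum _
      fun k _ => hint _ ((hEvMeas {j}).inter (hEvMeas {k}))]
    have hterm : ∀ j k : Fin n, ∫ ω, ((Ev {j}) ∩ (Ev {k})).indicator (fun _ => (1:ℝ)) ω ∂P
        = (P (Ev {j} ∩ Ev {k})).toReal :=
      fun j k => hindint _ ((hEvMeas {j}).inter (hEvMeas {k}))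
    have hinner : ∀ j : Fin n, ∑ k : Fin n, (P (Ev {j} ∩ Ev {k})).toReal
        = (∏ i, ((a i : ℝ)/n))
            + ((n:ℝ)-1) * ∏ i, ((a i : ℝ) * ((a i : ℝ) - 1) / ((n:ℝ) * ((n:ℝ) - 1))) := by
      intro j
      rw [← Finset.add_sum_erase _ _ (Finset.mem_univ j)]
      congr 1
      · rw [Set.inter_self, h1 j]
      · have hterms : ∀ k ∈ Finset.univ.erase j, (P (Ev {j} ∩ Ev {k})).toReal
            = ∏ i, ((a i : ℝ) * ((a i : ℝ) - 1) / ((n:ℝ) * ((n:ℝ) - 1))) := by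
          intro k hk
          have hjk : j ≠ k := fun h => (Finset.mem_erase.1 hk).1 h.symm
          rw [hpair j k, h2 j k hjk]
        rw [Finset.sum_congr rfl hterms, Finset.sum_const,
          Finset.card_erase_of_mem (Finset.mem_univ j), Finset.card_univ, Fintype.card_fin,
          nsmul_eq_mul, Nat.cast_sub (by omega : 1 ≤ n), Nat.cast_one]
    rw [Finset.sum_congr rfl fun j _ => by
      rw [Finset.sum_congr rfl fun k _ => hterm j k, hinner j]]
    rw [Finset.sum_const, Finset.card_univ, Fintype.card_fin, nsmul_eq_mul]
  -- conclude
  rw [hXY, variance_eq_sub hYL2]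
  have hp2 : P[Y ^ 2] = ∫ ω, (Y ω)^2 ∂P := by
    apply integral_congr_ae
    filter_upwards with ω
    simp [Pi.pow_apply]
  rw [hp2, hEY2]
  have hp1 : P[Y] = ∫ ω, Y ω ∂P := rfl
  rw [hp1, hEY]
  have hq2 : ∏ i, ((a i : ℝ) * ((a i : ℝ) - 1) / ((n:ℝ) * ((n:ℝ) - 1)))
      = (∏ i, ((a i : ℝ)/n)) * ∏ i, (((a i : ℝ) - 1)/((n:ℝ)-1)) := by
    rw [← Finset.prod_mul_distrib]
    exact Finset.prod_congr rfl fun i _ => (div_mul_div_comm _ _ _ _).symm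
  rw [hq2]
  ring

/-- **Corollary 1 (necessity).**
In the asymptotic coupon collector setting, if `Var(X_n)` converges to a finite constant `ρ`,
then `α_1 ∈ {0, 1}` and `α_2 ∈ {0, 1}`. -/
theorem coupon_variance_convergence_necessary
    (m : ℕ) (hm : 2 ≤ m)
    (Ω : ℕ → Type) [instΩ : ∀ n, MeasurableSpace (Ω n)]
    (P : ∀ n, Measure (Ω n)) (hP : ∀ n, IsProbabilityMeasure (P n))
    (a : ℕ → Fin m → ℕ)
    (S : ∀ n, Fin m → Ω n → Finset (Fin n))
    (hmeas : ∀ n (i : Fin m) (s : Finset (Fin n)), MeasurableSet {ω | S n i ω = s})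
    (hindep : ∀ n, iIndepFun (m := fun _ => ⊤) (S n) (P n))
    (hunif : ∀ n, 2 ≤ n → ∀ (i : Fin m) (s : Finset (Fin n)),
      P n {ω | S n i ω = s} = if s.card = a n i then ((n.choose (a n i) : ℝ≥0∞))⁻¹ else 0)
    (X : ∀ n, Ω n → ℕ)
    (hX : ∀ n ω, X n ω = (Finset.univ.inf fun i => S n i ω).card)
    (hA2 : ∀ i : Fin m, Tendsto (fun n => a n i) atTop atTop ∧
      Tendsto (fun n => n - a n i) atTop atTop)
    (hA3 : ∀ n, 2 ≤ n → Monotone (a n) ∧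
      1 ≤ a n ⟨0, by omega⟩ ∧ a n ⟨m - 1, by omega⟩ ≤ n - 1)
    (α : Fin m → ℝ) (hα : ∀ i, α i ∈ Set.Icc (0 : ℝ) 1)
    (hA4 : ∀ i : Fin m, Tendsto (fun n => (a n i : ℝ) / n) atTop (𝓝 (α i)))
    (ρ : ℝ) (hρ : Tendsto (fun n => variance (fun ω => (X n ω : ℝ)) (P n)) atTop (𝓝 ρ))
    :
    (α ⟨0, by omega⟩ = 0 ∨ α ⟨0, by omega⟩ = 1) ∧
      (α ⟨1, by omega⟩ = 0 ∨ α ⟨1, by omega⟩ = 1) := by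
  classical
  obtain ⟨m', rfl⟩ : ∃ m', m = m' + 2 := ⟨m - 2, by omega⟩
  set i0 : Fin (m' + 2) := ⟨0, by omega⟩ with hi0def
  set i1 : Fin (m' + 2) := ⟨1, by omega⟩ with hi1def
  set s : Finset (Fin (m' + 2)) := (Finset.univ.erase i0).erase i1 with hsdef
  have hi10 : i1 ≠ i0 := by
    simp only [hi0def, hi1def, ne_eq, Fin.mk.injEq]
    omega
  have hi1mem : i1 ∈ Finset.univ.erase i0 := Finset.mem_erase.2 ⟨hi10, Finset.mem_univ i1⟩
  have hsplit : ∀ f : Fin (m' + 2) → ℝ,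
      ∏ i, f i = f i0 * (f i1 * ∏ i ∈ s, f i) := by
    intro f
    rw [hsdef, Finset.mul_prod_erase _ f hi1mem, Finset.mul_prod_erase _ f (Finset.mem_univ i0)]
  have hcard_s : s.card = m' := by
    rw [hsdef, Finset.card_erase_of_mem hi1mem, Finset.card_erase_of_mem (Finset.mem_univ i0),
      Finset.card_univ, Fintype.card_fin]
    omega
  have hmems : ∀ i ∈ s, i1 ≤ i := by
    intro i hi
    rw [hsdef, Finset.mem_erase, Finset.mem_erase] at hi
    have h0 : i ≠ i0 := hi.2.1
    have h1 : i ≠ i1 := hi.1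
    have hne0 : i.val ≠ 0 := fun h => h0 (by rw [hi0def]; exact Fin.ext h)
    have hne1 : i.val ≠ 1 := fun h => h1 (by rw [hi1def]; exact Fin.ext h)
    have hge : (1:ℕ) ≤ i.val := by omega
    rw [hi1def, Fin.le_def]
    exact hge
  -- monotonicity of α
  have hmono : ∀ i j : Fin (m' + 2), i ≤ j → α i ≤ α j := by
    intro i j hij
    refine le_of_tendsto_of_tendsto (hA4 i) (hA4 j) ?_
    filter_upwards [eventually_ge_atTop 2] with n hn2
    have := (hA3 n hn2).1 hij
    have hn0 : (0:ℝ) < n := by positivity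
    have hc : (a n i : ℝ) ≤ (a n j : ℝ) := by exact_mod_cast this
    gcongr
  -- eventual bounds on a
  have ha2ev : ∀ᶠ n in atTop, ∀ i, 2 ≤ a n i :=
    eventually_all.2 fun i => (hA2 i).1.eventually_ge_atTop 2
  have hanev : ∀ᶠ n in atTop, ∀ i, a n i ≤ n - 1 := by
    filter_upwards [eventually_ge_atTop 2] with n hn2 i
    have hmon := (hA3 n hn2).1
    have htop := (hA3 n hn2).2.2
    have : i ≤ (⟨m' + 2 - 1, by omega⟩ : Fin (m' + 2)) := by
      rw [Fin.le_def]
      show i.val ≤ m' + 2 - 1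
      have := i.isLt
      omega
    exact le_trans (hmon this) htop
  -- lower bound function
  set GG : ℕ → ℝ := fun n =>
    ((n : ℝ) * ∏ i, ((a n i : ℝ) / n)) *
      (((n : ℝ) - (a n i0 : ℝ)) * ((n : ℝ) - (a n i1 : ℝ)) / ((n : ℝ) * ((n : ℝ) - 1)) *
        ∏ i ∈ s, (((a n i : ℝ) - 1) / ((n : ℝ) - 1))) with hGGdef
  -- eventual lower bound on the variance
  have hbound : ∀ᶠ n in atTop,
      GG n ≤ variance (fun ω => (X n ω : ℝ)) (P n) := by
    filter_upwards [eventually_ge_atTop 2, ha2ev, hanev] with n hn2 ha2n hann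
    haveI := hP n
    have han : ∀ i, a n i ≤ n := fun i => le_trans (hann i) (by omega)
    have hfun : (fun ω => (X n ω : ℝ))
        = (fun ω => ((Finset.univ.inf fun i => S n i ω).card : ℝ)) := by
      funext ω; rw [hX n ω]
    rw [hfun, var_formula (P n) (a n) (S n) (hmeas n) (hindep n) (hunif n hn2) hn2 ha2n han]
    have hn0 : (0:ℝ) < n := by positivity
    have hn2R : (2:ℝ) ≤ n := by exact_mod_cast hn2
    have hn1 : (0:ℝ) < (n:ℝ) - 1 := by linarith
    have hU : (0:ℝ) ≤ (n : ℝ) * ∏ i, ((a n i : ℝ) / n) := by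
      apply mul_nonneg (le_of_lt hn0)
      exact Finset.prod_nonneg fun i _ => div_nonneg (Nat.cast_nonneg _) (le_of_lt hn0)
    have hkey := key_ineq (n := (n:ℝ)) (x := (a n i0 : ℝ)) (y := (a n i1 : ℝ)) hn2R
      (by exact_mod_cast le_trans one_le_two (ha2n i0))
      (by exact_mod_cast han i0)
      (by exact_mod_cast le_trans one_le_two (ha2n i1))
      (by exact_mod_cast han i1)
      s (fun i => (a n i : ℝ))
      (fun i _ => ⟨by show (1:ℝ) ≤ (a n i : ℝ); exact_mod_cast le_trans one_le_two (ha2n i),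
        by show (a n i : ℝ) ≤ (n:ℝ); exact_mod_cast han i⟩)
    rw [hcard_s] at hkey
    have hbridge : 1 - (n : ℝ) * ∏ i, ((a n i : ℝ) / n)
          + ((n : ℝ) - 1) * ∏ i, (((a n i : ℝ) - 1) / ((n : ℝ) - 1))
        = 1 - (a n i0 : ℝ) * (a n i1 : ℝ) * (∏ i ∈ s, (a n i : ℝ)) / (n:ℝ) ^ (m' + 1)
          + ((a n i0 : ℝ) - 1) * ((a n i1 : ℝ) - 1) * (∏ i ∈ s, ((a n i : ℝ) - 1))
              / ((n:ℝ) - 1) ^ (m' + 1) := by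
      have e1 : ∏ i, ((a n i : ℝ) / n) = (∏ i, (a n i : ℝ)) / (n : ℝ) ^ (m' + 2) := by
        rw [Finset.prod_div_distrib, Finset.prod_const, Finset.card_univ, Fintype.card_fin]
      have e2 : ∏ i, (((a n i : ℝ) - 1) / ((n : ℝ) - 1))
          = (∏ i, ((a n i : ℝ) - 1)) / ((n : ℝ) - 1) ^ (m' + 2) := by
        rw [Finset.prod_div_distrib, Finset.prod_const, Finset.card_univ, Fintype.card_fin]
      rw [e1, e2, hsplit (fun i => (a n i : ℝ)), hsplit (fun i => (a n i : ℝ) - 1)]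
      field_simp
      ring
    rw [← hbridge] at hkey
    simp only [hGGdef]
    exact mul_le_mul_of_nonneg_left hkey hU
  -- limit machinery
  have hNat : Tendsto (fun n : ℕ => (n:ℝ)) atTop atTop := tendsto_natCast_atTop_atTop
  have hsub1 : Tendsto (fun n : ℕ => (n:ℝ) - 1) atTop atTop := by
    simpa [sub_eq_add_neg] using tendsto_atTop_add_const_right atTop (-1 : ℝ) hNat
  have hinvn : Tendsto (fun n : ℕ => 1/(n:ℝ)) atTop (𝓝 0) := tendsto_one_div_atTop_nhds_zero_nat
  have hratio : Tendsto (fun n : ℕ => (n:ℝ)/((n:ℝ)-1)) atTop (𝓝 1) := by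
    have h0 : Tendsto (fun n : ℕ => 1 + ((n:ℝ)-1)⁻¹) atTop (𝓝 (1+0)) :=
      tendsto_const_nhds.add hsub1.inv_tendsto_atTop
    rw [add_zero] at h0
    apply h0.congr'
    filter_upwards [eventually_ge_atTop 2] with n hn2
    have hn2R : (2:ℝ) ≤ n := by exact_mod_cast hn2
    have h1 : (n:ℝ) - 1 ≠ 0 := by linarith
    field_simp
    ring
  have L2 : ∀ i, Tendsto (fun n : ℕ => ((a n i : ℝ)-1)/((n:ℝ)-1)) atTop (𝓝 (α i)) := by
    intro i
    have base : Tendsto (fun n : ℕ => ((a n i:ℝ)/n - 1/n) * ((n:ℝ)/((n:ℝ)-1))) atTop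
        (𝓝 ((α i - 0)*1)) := ((hA4 i).sub hinvn).mul hratio
    rw [sub_zero, mul_one] at base
    apply base.congr'
    filter_upwards [eventually_ge_atTop 2] with n hn2
    have hn2R : (2:ℝ) ≤ n := by exact_mod_cast hn2
    have h0 : (n:ℝ) ≠ 0 := by linarith
    have h1 : (n:ℝ) - 1 ≠ 0 := by linarith
    field_simp
  have L3 : ∀ i, Tendsto (fun n : ℕ => ((n:ℝ) - (a n i : ℝ))/n) atTop (𝓝 (1 - α i)) := by
    intro i
    have base : Tendsto (fun n : ℕ => 1 - (a n i:ℝ)/n) atTop (𝓝 (1 - α i)) :=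
      tendsto_const_nhds.sub (hA4 i)
    apply base.congr'
    filter_upwards [eventually_ge_atTop 2] with n hn2
    have hn2R : (2:ℝ) ≤ n := by exact_mod_cast hn2
    have h0 : (n:ℝ) ≠ 0 := by linarith
    field_simp
  have L4 : ∀ i, Tendsto (fun n : ℕ => ((n:ℝ) - (a n i : ℝ))/((n:ℝ)-1)) atTop (𝓝 (1 - α i)) := by
    intro i
    have base : Tendsto (fun n : ℕ => (((n:ℝ) - (a n i:ℝ))/n) * ((n:ℝ)/((n:ℝ)-1))) atTop
        (𝓝 ((1 - α i)*1)) := (L3 i).mul hratio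
    rw [mul_one] at base
    apply base.congr'
    filter_upwards [eventually_ge_atTop 2] with n hn2
    have hn2R : (2:ℝ) ≤ n := by exact_mod_cast hn2
    have h0 : (n:ℝ) ≠ 0 := by linarith
    have h1 : (n:ℝ) - 1 ≠ 0 := by linarith
    field_simp
  have hprods : Tendsto (fun n : ℕ => ∏ i ∈ s, (((a n i:ℝ)/n) * (((a n i:ℝ)-1)/((n:ℝ)-1))))
      atTop (𝓝 (∏ i ∈ s, (α i * α i))) :=
    tendsto_finset_prod s fun i _ => (hA4 i).mul (L2 i)
  have finish : Tendsto GG atTop atTop → False := fun hGGtop =>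
    not_tendsto_nhds_of_tendsto_atTop (tendsto_atTop_mono' atTop hbound hGGtop) ρ hρ
  have hD1 : Tendsto (fun n : ℕ => (n:ℝ) - (a n i1 : ℝ)) atTop atTop := by
    have hc : Tendsto (fun n : ℕ => ((n - a n i1 : ℕ) : ℝ)) atTop atTop :=
      tendsto_natCast_atTop_atTop.comp (hA2 i1).2
    apply hc.congr'
    filter_upwards [hanev, eventually_ge_atTop 2] with n han hn2
    rw [Nat.cast_sub (le_trans (han i1) (by omega))]
  have hD0 : Tendsto (fun n : ℕ => ((a n i0 : ℕ) : ℝ)) atTop atTop :=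
    tendsto_natCast_atTop_atTop.comp (hA2 i0).1
  have hle01 : i0 ≤ i1 := by rw [hi0def, hi1def]; exact Fin.mk_le_mk.2 (by omega)
  have hle0 : ∀ i, i0 ≤ i := by
    intro i
    rw [hi0def, Fin.le_def]
    exact Nat.zero_le _
  -- Case A : 0 < α i0 < 1
  have caseA : 0 < α i0 → α i0 < 1 → False := by
    intro hpos hlt
    have hprodpos : 0 < ∏ i ∈ s, (α i * α i) := by
      apply Finset.prod_pos
      intro i hi
      have : α i0 ≤ α i := hmono i0 i (hle0 i)
      nlinarith
    have h1pos : 0 < α i1 := lt_of_lt_of_le hpos (hmono i0 i1 hle01)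
    have hL : 0 < α i0 * α i1 * (1 - α i0) * 1 * ∏ i ∈ s, (α i * α i) := by
      have h10 : 0 < 1 - α i0 := by linarith
      have := mul_pos (mul_pos (mul_pos (mul_pos hpos h1pos) h10) one_pos) hprodpos
      simpa using this
    have hFA : Tendsto (fun n : ℕ => ((a n i0:ℝ)/n) * ((a n i1:ℝ)/n) * (((n:ℝ)-(a n i0:ℝ))/n)
          * ((n:ℝ)/((n:ℝ)-1)) * ∏ i ∈ s, (((a n i:ℝ)/n) * (((a n i:ℝ)-1)/((n:ℝ)-1))))
        atTop (𝓝 (α i0 * α i1 * (1 - α i0) * 1 * ∏ i ∈ s, (α i * α i))) :=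
      ((((hA4 i0).mul (hA4 i1)).mul (L3 i0)).mul hratio).mul hprods
    apply finish
    apply Tendsto.congr' ?_ (Tendsto.pos_mul_atTop hL hFA hD1)
    filter_upwards [eventually_ge_atTop 2] with n hn2
    have hn2R : (2:ℝ) ≤ n := by exact_mod_cast hn2
    have h0 : (n:ℝ) ≠ 0 := by linarith
    have h1 : (n:ℝ) - 1 ≠ 0 := by linarith
    simp only [hGGdef]
    rw [hsplit (fun i => (a n i : ℝ)/(n:ℝ)), Finset.prod_mul_distrib]
    field_simp
  -- Case B : α i0 = 0, 0 < α i1 < 1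
  have caseB : α i0 = 0 → 0 < α i1 → α i1 < 1 → False := by
    intro h0eq h1pos h1lt
    have hprodpos : 0 < ∏ i ∈ s, (α i * α i) := by
      apply Finset.prod_pos
      intro i hi
      have : α i1 ≤ α i := hmono i1 i (hmems i hi)
      nlinarith
    have hL : 0 < α i1 * ((1 - α i0)/1) * (1 - α i1) * ∏ i ∈ s, (α i * α i) := by
      rw [h0eq]
      have h11 : 0 < 1 - α i1 := by linarith
      have := mul_pos (mul_pos (mul_pos h1pos one_pos) h11) hprodpos
      simpa using this
    have hFB : Tendsto (fun n : ℕ => ((a n i1:ℝ)/n) * (((n:ℝ)-(a n i0:ℝ))/n)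
          * (((n:ℝ)-(a n i1:ℝ))/((n:ℝ)-1))
          * ∏ i ∈ s, (((a n i:ℝ)/n) * (((a n i:ℝ)-1)/((n:ℝ)-1))))
        atTop (𝓝 (α i1 * (1 - α i0) * (1 - α i1) * ∏ i ∈ s, (α i * α i))) :=
      (((hA4 i1).mul (L3 i0)).mul (L4 i1)).mul hprods
    have hL' : 0 < α i1 * (1 - α i0) * (1 - α i1) * ∏ i ∈ s, (α i * α i) := by
      have := hL
      rw [div_one] at this
      exact this
    apply finish
    apply Tendsto.congr' ?_ (Tendsto.pos_mul_atTop hL' hFB hD0)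
    filter_upwards [eventually_ge_atTop 2] with n hn2
    have hn2R : (2:ℝ) ≤ n := by exact_mod_cast hn2
    have h0 : (n:ℝ) ≠ 0 := by linarith
    have h1 : (n:ℝ) - 1 ≠ 0 := by linarith
    simp only [hGGdef]
    rw [hsplit (fun i => (a n i : ℝ)/(n:ℝ)), Finset.prod_mul_distrib]
    field_simp
  -- case analysis
  by_contra hcon
  rw [not_and_or] at hcon
  rcases hcon with h0 | h1
  · push_neg at h0
    obtain ⟨hne0, hne1⟩ := h0
    have hmem := hα i0
    exact caseA (lt_of_le_of_ne hmem.1 (Ne.symm hne0)) (lt_of_le_of_ne hmem.2 hne1)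
  · push_neg at h1
    obtain ⟨hne0, hne1⟩ := h1
    have hmem1 := hα i1
    have h1pos : 0 < α i1 := lt_of_le_of_ne hmem1.1 (Ne.symm hne0)
    have h1lt : α i1 < 1 := lt_of_le_of_ne hmem1.2 hne1
    rcases lt_or_eq_of_le (hα i0).1 with h0pos | h0eq
    · exact caseA h0pos (lt_of_le_of_lt (hmono i0 i1 hle01) h1lt)
    · exact caseB h0eq.symm h1pos h1lt
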